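/- In the positive braid monoid B_n⁺ (n ≥ 2), the elements x satisfying x = σ_{n-1}σ_{n-2}···σ_m·y for some m with 2 ≤ m ≤ n and some y ∈ B_{m-1}⁺ are exactly the left divisors-in-the-order sense characterized as those strictly below δ_n = σ_{n-1}···σ₁ in the ordering <⁺ defined recursively via n-splittings. Equivalently: x <⁺ δ_n holds if and only if x = σ_{n-1}···σ_m·y with n ≥ m ≥ 2 and y ∈ B_{m-1}⁺. -/

import Mathlib

/-- The braid relations on the free monoid over `Fin N`
(generator `i : Fin N` stands for `σ_{i+1}`). -/
def braidRel (N : ℕ) : FreeMonoid (Fin N) → FreeMonoid (Fin N) → Prop := fun a b =>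
  (∃ i j : Fin N, ((i : ℕ) + 2 ≤ (j : ℕ) ∨ (j : ℕ) + 2 ≤ (i : ℕ)) ∧
      a = FreeMonoid.of i * FreeMonoid.of j ∧ b = FreeMonoid.of j * FreeMonoid.of i) ∨
  (∃ i j : Fin N, ((i : ℕ) + 1 = (j : ℕ) ∨ (j : ℕ) + 1 = (i : ℕ)) ∧
      a = FreeMonoid.of i * FreeMonoid.of j * FreeMonoid.of i ∧
      b = FreeMonoid.of j * FreeMonoid.of i * FreeMonoid.of j)

def braidCon (N : ℕ) : Con (FreeMonoid (Fin N)) := conGen (braidRel N)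

/-- The positive braid monoid on `N+1` strands `B_{N+1}⁺`,
with generators `σ_1, …, σ_N` indexed by `Fin N`. -/
abbrev PosBraid (N : ℕ) := (braidCon N).Quotient

/-- The generator `σ_{i+1}` of the positive braid monoid. -/
def sigma {N : ℕ} (i : Fin N) : PosBraid N := (braidCon N).mk' (FreeMonoid.of i)

/-- The flip automorphism `Φ_{N+1} : σ_i ↦ σ_{N+1-i}`. -/
def flipH (N : ℕ) : PosBraid N →* PosBraid N :=
  Con.lift _ ((braidCon N).mk'.comp (FreeMonoid.map Fin.rev)) <| by
    apply Con.conGen_le.mpr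
    rintro a b (⟨i, j, hij, rfl, rfl⟩ | ⟨i, j, hij, rfl, rfl⟩) <;>
      simp only [Con.ker_rel, MonoidHom.comp_apply, map_mul, FreeMonoid.map_of] <;>
      refine (Con.eq _).mpr (ConGen.Rel.of _ _ ?_)
    · exact Or.inl ⟨Fin.rev i, Fin.rev j, by
        simp only [Fin.val_rev]; omega, rfl, rfl⟩
    · exact Or.inr ⟨Fin.rev i, Fin.rev j, by
        simp only [Fin.val_rev]; omega, rfl, rfl⟩

/-- The inclusion `B_{N+1}⁺ → B_{N+2}⁺`. -/
def incl (N : ℕ) : PosBraid N →* PosBraid (N + 1) :=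
  Con.lift _ ((braidCon (N + 1)).mk'.comp (FreeMonoid.map Fin.castSucc)) <| by
    apply Con.conGen_le.mpr
    rintro a b (⟨i, j, hij, rfl, rfl⟩ | ⟨i, j, hij, rfl, rfl⟩) <;>
      simp only [Con.ker_rel, MonoidHom.comp_apply, map_mul, FreeMonoid.map_of] <;>
      refine (Con.eq _).mpr (ConGen.Rel.of _ _ ?_)
    · exact Or.inl ⟨i.castSucc, j.castSucc, by simpa using hij, rfl, rfl⟩
    · exact Or.inr ⟨i.castSucc, j.castSucc, by simpa using hij, rfl, rfl⟩

/-- Product `f^{p-1}(x_p) ⋯ f(x_2) · x_1` of the list `[x_p, …, x_1]`,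
where each entry is twisted by an iterate of `f`. -/
def prodFlip {M : Type*} [Monoid M] (f : M → M) : List M → M
  | [] => 1
  | a :: t => f^[t.length] a * prodFlip f t

/-- `l = [x_p, …, x_1]` (a list of elements of `B_{k+1}⁺`) is the `(k+2)`-splitting of
`x ∈ B_{k+2}⁺` : `x = Φ^{p-1}(x_p) ⋯ Φ(x_2)·x_1`, the leading entry is non-trivial, and
for every `r ≥ 2` the only generator `σ_i` right-dividing `Φ^{p-r}(x_p) ⋯ Φ(x_{r+1})·x_r`
is `σ_1`. -/
def IsSplit {k : ℕ} (x : PosBraid (k + 1)) (l : List (PosBraid k)) : Prop :=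
  x = prodFlip (⇑(flipH (k + 1))) (l.map (incl k)) ∧
  l.head? ≠ some 1 ∧
  ∀ j, 1 ≤ j → j < l.length →
    (∃ z, prodFlip (⇑(flipH (k + 1))) ((l.take j).map (incl k)) =
        z * sigma (⟨0, Nat.succ_pos k⟩ : Fin (k + 1))) ∧
    ∀ i : Fin (k + 1),
      (∃ z, prodFlip (⇑(flipH (k + 1))) ((l.take j).map (incl k)) = z * sigma i) →
      i = (⟨0, Nat.succ_pos k⟩ : Fin (k + 1))

/-- `σ_{i+1}` as an element of `B_{N+1}⁺`, extended by `1` for out-of-range indices. -/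
def sigmaP (N : ℕ) (i : ℕ) : PosBraid N := if h : i < N then sigma ⟨i, h⟩ else 1

/-- `δ_{N+1} = σ_N σ_{N-1} ⋯ σ_1` in `B_{N+1}⁺`. -/
def deltaFull (N : ℕ) : PosBraid N := ((List.ofFn (sigma (N := N))).reverse).prod

/-- `Δ_m` (the Garside element of `B_m⁺`), viewed inside `B_{N+1}⁺`,
via `Δ_1 = 1` and `Δ_{m+1} = σ_1 ⋯ σ_m · Δ_m`. -/
def DeltaP (N : ℕ) : ℕ → PosBraid N
  | 0 => 1
  | m + 1 => ((List.range m).map (sigmaP N)).prod * DeltaP N m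

/-- `\widehatΔ_{N+1,d} = Φ^d(δ_{N+1}) ⋯ Φ²(δ_{N+1}) · Φ(δ_{N+1})` (`d` factors). -/
def hatDelta (N : ℕ) (d : ℕ) : PosBraid N :=
  ((List.range d).map (fun j => (⇑(flipH N))^[d - j] (deltaFull N))).prod

/-- ShortLex extension of a relation: compare lists first by length,
then lexicographically (from the left). -/
def SL {α : Type*} (r : α → α → Prop) (s t : List α) : Prop :=
  s.length < t.length ∨ (s.length = t.length ∧ List.Lex r s t)

/-- The ordering `<⁺` of `B_{k+1}⁺`, defined recursively: on `B_2⁺` it is the comparison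
of exponents of `σ_1`; on `B_{k+2}⁺` it is the ShortLex comparison of `(k+2)`-splittings,
entries being compared by `<⁺` on `B_{k+1}⁺`. -/
def ordP : (k : ℕ) → PosBraid k → PosBraid k → Prop
  | 0 => fun _ _ => False
  | 1 => fun x y => ∃ p q : ℕ, x = sigma (0 : Fin 1) ^ p ∧ y = sigma (0 : Fin 1) ^ q ∧ p < q
  | (k + 2) => fun x y => ∃ lx ly : List (PosBraid (k + 1)),
      IsSplit x lx ∧ IsSplit y ly ∧ SL (ordP (k + 1)) lx ly

/-!
Call a word in the generators rigid if no factor of it is a side of a braid relation: no relation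
applies to it, so it is the only word representing its braid. The words of `δ_n = σ_{n-1} ⋯ σ_1`
and of the generators are rigid. This forces the `n`-splitting of `δ_n` to be `(σ_1, δ_{n-1})`
and that of `σ_1` to be `(σ_1)`, and shows that only `1` lies below `σ_1`. Comparing with
`(σ_1, δ_{n-1})` in the ShortLex order, `x <⁺ δ_n` holds exactly when `x ∈ B_{n-1}⁺` (a shorter
splitting) or `x = σ_{n-1} x'` with `x' ∈ B_{n-1}⁺` and `x' <⁺ δ_{n-1}` (the splitting `(σ_1, x')`).
The braids `σ_{n-1} ⋯ σ_m y` satisfy the same recursion, and induction on `n` concludes.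
-/

namespace PosBraid

section Words

variable {N : ℕ}

def ofWord (w : List (Fin N)) : PosBraid N := (braidCon N).mk' (FreeMonoid.ofList w)

lemma ofWord_append (u v : List (Fin N)) : ofWord (u ++ v) = ofWord u * ofWord v := by
  simp [ofWord, FreeMonoid.ofList_append]

lemma ofWord_cons (i : Fin N) (w : List (Fin N)) : ofWord (i :: w) = sigma i * ofWord w :=
  ofWord_append [i] w

lemma sigma_eq_ofWord (i : Fin N) : sigma i = ofWord [i] := rfl

lemma exists_ofWord_eq (x : PosBraid N) : ∃ w, ofWord w = x := by
  obtain ⟨a, rfl⟩ := Con.mk'_surjective (c := braidCon N) x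
  exact ⟨a.toList, by simp [ofWord]⟩

lemma flipH_ofWord (w : List (Fin N)) : flipH N (ofWord w) = ofWord (w.map Fin.rev) := rfl

lemma incl_ofWord (w : List (Fin N)) : incl N (ofWord w) = ofWord (w.map Fin.castSucc) := rfl

lemma flipH_sigma (i : Fin N) : flipH N (sigma i) = sigma i.rev := rfl

lemma incl_sigma (i : Fin N) : incl N (sigma i) = sigma i.castSucc := rfl

lemma closure_range_sigma : Submonoid.closure (Set.range (sigma (N := N))) = ⊤ := by
  refine (Submonoid.eq_top_iff' _).2 fun x => ?_
  obtain ⟨w, rfl⟩ := exists_ofWord_eq x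
  induction w with
  | nil => exact one_mem _
  | cons i w ih => rw [ofWord_cons]; exact mul_mem (Submonoid.subset_closure ⟨i, rfl⟩) ih

def HasBraidFactor (w : List (Fin N)) : Prop :=
  (∃ (u v : List (Fin N)) (i j : Fin N),
      ((i : ℕ) + 2 ≤ (j : ℕ) ∨ (j : ℕ) + 2 ≤ (i : ℕ)) ∧ w = u ++ i :: j :: v) ∨
  (∃ (u v : List (Fin N)) (i j : Fin N),
      ((i : ℕ) + 1 = (j : ℕ) ∨ (j : ℕ) + 1 = (i : ℕ)) ∧ w = u ++ i :: j :: i :: v)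

lemma HasBraidFactor.append_right {w : List (Fin N)} (h : HasBraidFactor w) (c : List (Fin N)) :
    HasBraidFactor (w ++ c) := by
  rcases h with ⟨u, v, i, j, hij, rfl⟩ | ⟨u, v, i, j, hij, rfl⟩
  · exact Or.inl ⟨u, v ++ c, i, j, hij, by simp⟩
  · exact Or.inr ⟨u, v ++ c, i, j, hij, by simp⟩

lemma HasBraidFactor.append_left {w : List (Fin N)} (h : HasBraidFactor w) (c : List (Fin N)) :
    HasBraidFactor (c ++ w) := by
  rcases h with ⟨u, v, i, j, hij, rfl⟩ | ⟨u, v, i, j, hij, rfl⟩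
  · exact Or.inl ⟨c ++ u, v, i, j, hij, by simp⟩
  · exact Or.inr ⟨c ++ u, v, i, j, hij, by simp⟩

/-- No braid relation applies to a word without braid factor, so this congruence contains
`braidRel`; hence such a word is alone in its `braidCon`-class. -/
def rigidCon (N : ℕ) : Con (FreeMonoid (Fin N)) where
  r a b := (¬ HasBraidFactor a.toList → a = b) ∧ (¬ HasBraidFactor b.toList → b = a)
  iseqv := by
    refine ⟨fun a => ⟨fun _ => rfl, fun _ => rfl⟩, fun h => ⟨h.2, h.1⟩, ?_⟩
    rintro a b c ⟨hab, hba⟩ ⟨hbc, hcb⟩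
    constructor
    · intro ha; obtain rfl := hab ha; exact hbc ha
    · intro hc; obtain rfl := hcb hc; exact hba hc
  mul' := by
    rintro a b c d ⟨hab, hba⟩ ⟨hcd, hdc⟩
    simp only [FreeMonoid.toList_mul]
    constructor
    · intro h
      rw [hab fun hr => h (hr.append_right _), hcd fun hr => h (hr.append_left _)]
    · intro h
      rw [hba fun hr => h (hr.append_right _), hdc fun hr => h (hr.append_left _)]

lemma braidCon_le_rigidCon (N : ℕ) : braidCon N ≤ rigidCon N := by
  refine Con.conGen_le.mpr ?_
  rintro a b (⟨i, j, hij, rfl, rfl⟩ | ⟨i, j, hij, rfl, rfl⟩)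
  · exact ⟨fun h => absurd (Or.inl ⟨[], [], i, j, hij, rfl⟩) h,
      fun h => absurd (Or.inl ⟨[], [], j, i, hij.symm, rfl⟩) h⟩
  · exact ⟨fun h => absurd (Or.inr ⟨[], [], i, j, hij, rfl⟩) h,
      fun h => absurd (Or.inr ⟨[], [], j, i, hij.symm, rfl⟩) h⟩

theorem eq_of_ofWord_eq_ofWord {u v : List (Fin N)} (h : ofWord u = ofWord v)
    (hv : ¬ HasBraidFactor v) : u = v := by
  have huv : braidCon N (FreeMonoid.ofList u) (FreeMonoid.ofList v) := (Con.eq _).mp h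
  exact FreeMonoid.ofList.injective ((braidCon_le_rigidCon N huv).2 hv).symm

lemma not_hasBraidFactor_of_isChain {w : List (Fin N)}
    (hw : w.IsChain fun a b : Fin N => (a : ℕ) = b + 1) : ¬ HasBraidFactor w := by
  rintro (⟨u, v, i, j, hij, rfl⟩ | ⟨u, v, i, j, hij, rfl⟩)
  · have := hw.infix (l₁ := [i, j]) ⟨u, v, by simp⟩
    simp only [List.isChain_pair] at this
    omega
  · have := hw.infix (l₁ := [i, j, i]) ⟨u, v, by simp⟩
    simp only [List.isChain_cons_cons, List.isChain_singleton, and_true] at this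
    omega

lemma ofWord_eq_sigma_iff {w : List (Fin N)} {i : Fin N} : ofWord w = sigma i ↔ w = [i] :=
  ⟨fun h => eq_of_ofWord_eq_ofWord h (not_hasBraidFactor_of_isChain (List.isChain_singleton i)),
    fun h => h ▸ rfl⟩

lemma sigma_ne_one (i : Fin N) : sigma i ≠ 1 := fun h => by
  simpa using ofWord_eq_sigma_iff.mp (h.symm.trans (sigma_eq_ofWord i))

lemma eq_of_mul_sigma_eq_sigma {z : PosBraid N} {i j : Fin N} (h : z * sigma i = sigma j) :
    i = j := by
  obtain ⟨w, rfl⟩ := exists_ofWord_eq z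
  rw [sigma_eq_ofWord i, ← ofWord_append, ofWord_eq_sigma_iff] at h
  rcases w with _ | ⟨a, w⟩ <;> simp_all

lemma sigma_pow_eq_ofWord (i : Fin N) (p : ℕ) : sigma i ^ p = ofWord (List.replicate p i) := by
  induction p with
  | zero => rfl
  | succ p ih => rw [pow_succ, ih, sigma_eq_ofWord, ← ofWord_append, ← List.replicate_succ']

lemma eq_one_of_sigma_pow_eq_sigma {i : Fin N} {q : ℕ} (h : sigma i ^ q = sigma i) : q = 1 := by
  rw [sigma_pow_eq_ofWord, ofWord_eq_sigma_iff] at h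
  simpa using congrArg List.length h

end Words

section Delta

variable {N : ℕ}

def deltaWord (N : ℕ) : List (Fin N) := (List.finRange N).reverse

lemma deltaFull_eq_ofWord (N : ℕ) : deltaFull N = ofWord (deltaWord N) := by
  rw [deltaFull, deltaWord, List.ofFn_eq_map, ← List.map_reverse]
  induction (List.finRange N).reverse with
  | nil => rfl
  | cons i w ih => rw [List.map_cons, List.prod_cons, ih, ofWord_cons]

lemma deltaWord_succ (N : ℕ) :
    deltaWord (N + 1) = Fin.last N :: (deltaWord N).map Fin.castSucc := by
  simp [deltaWord, List.finRange_succ_last, List.map_reverse]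

lemma deltaFull_succ (N : ℕ) :
    deltaFull (N + 1) = sigma (Fin.last N) * incl N (deltaFull N) := by
  rw [deltaFull_eq_ofWord, deltaFull_eq_ofWord, incl_ofWord, deltaWord_succ, ofWord_cons]

lemma ofWord_eq_deltaFull_iff {w : List (Fin N)} : ofWord w = deltaFull N ↔ w = deltaWord N := by
  refine ⟨fun h => eq_of_ofWord_eq_ofWord (h.trans (deltaFull_eq_ofWord N))
    (not_hasBraidFactor_of_isChain ?_), fun h => h ▸ (deltaFull_eq_ofWord N).symm⟩
  rw [deltaWord, List.isChain_reverse, List.isChain_iff_getElem]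
  intro i hi
  simp

lemma last_notMem_map_castSucc (w : List (Fin N)) : Fin.last N ∉ w.map Fin.castSucc := by
  simp [Fin.castSucc_ne_last]

lemma incl_ne_deltaFull (a : PosBraid N) : incl N a ≠ deltaFull (N + 1) := by
  obtain ⟨w, rfl⟩ := exists_ofWord_eq a
  rw [incl_ofWord, Ne, ofWord_eq_deltaFull_iff, deltaWord_succ]
  intro h
  exact last_notMem_map_castSucc w (h ▸ List.mem_cons_self)

/-- The letter `σ_N` occurs exactly once in the rigid word of `δ_{N+1}`. -/
lemma eq_of_flipH_mul_sigma_zero_mul_incl_eq_deltaFull {z : PosBraid (N + 1)} {a : PosBraid N}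
    (h : flipH (N + 1) (z * sigma 0) * incl N a = deltaFull (N + 1)) :
    z = 1 ∧ a = deltaFull N := by
  obtain ⟨u, rfl⟩ := exists_ofWord_eq z
  obtain ⟨w, rfl⟩ := exists_ofWord_eq a
  rw [sigma_eq_ofWord, ← ofWord_append, flipH_ofWord, incl_ofWord, ← ofWord_append,
    ofWord_eq_deltaFull_iff, deltaWord_succ] at h
  rcases u with _ | ⟨c, u⟩
  · simp only [List.nil_append, List.map_cons, Fin.rev_zero, List.map_nil, List.cons_append,
      List.cons.injEq, true_and] at h
    rw [(List.map_injective_iff.mpr (Fin.castSucc_injective N)) h]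
    exact ⟨rfl, (deltaFull_eq_ofWord N).symm⟩
  · simp only [List.cons_append, List.map_cons, List.map_append, List.map_nil, Fin.rev_zero,
      List.cons.injEq] at h
    exact (last_notMem_map_castSucc (deltaWord N) (by rw [← h.2]; simp)).elim

lemma eq_sigma_zero_of_incl_eq_sigma_zero {a : PosBraid (N + 1)}
    (h : incl (N + 1) a = sigma 0) : a = sigma 0 := by
  obtain ⟨w, rfl⟩ := exists_ofWord_eq a
  rw [incl_ofWord, ofWord_eq_sigma_iff] at h
  rcases w with _ | ⟨c, _ | ⟨d, w⟩⟩ <;> simp only [List.map_cons, List.map_nil, List.cons.injEq,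
    reduceCtorEq, and_false, and_true] at h
  rw [sigma_eq_ofWord, Fin.castSucc_eq_zero_iff.mp h]

lemma flipH_mul_sigma_zero_mul_incl_ne_sigma_zero (z : PosBraid (N + 2)) (a : PosBraid (N + 1)) :
    flipH (N + 2) (z * sigma 0) * incl (N + 1) a ≠ sigma 0 := by
  obtain ⟨u, rfl⟩ := exists_ofWord_eq z
  obtain ⟨w, rfl⟩ := exists_ofWord_eq a
  rw [sigma_eq_ofWord, ← ofWord_append, flipH_ofWord, incl_ofWord, ← ofWord_append]
  intro h
  replace h := ofWord_eq_sigma_iff.mp h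
  have hlen := congrArg List.length h
  simp only [List.length_append, List.length_map, List.length_cons, List.length_nil] at hlen
  obtain ⟨rfl, rfl⟩ : u = [] ∧ w = [] :=
    ⟨List.eq_nil_of_length_eq_zero (by omega), List.eq_nil_of_length_eq_zero (by omega)⟩
  simp [Fin.ext_iff] at h

end Delta

section Splitting

lemma prodFlip_append_singleton {M : Type*} [Monoid M] (f : M →* M) (l : List M) (a : M) :
    prodFlip f (l ++ [a]) = f (prodFlip f l) * a := by
  induction l with
  | nil => simp [prodFlip]
  | cons c l ih =>
    simp only [List.cons_append, prodFlip, ih, List.length_append, List.length_singleton,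
      Function.iterate_succ_apply', map_mul, mul_assoc]

variable {k : ℕ}

/-- The braid `Φ^{p-1}(x_p) ⋯ Φ(x_2) · x_1` whose splitting is `l = [x_p, …, x_1]`. -/
def splitProd (l : List (PosBraid k)) : PosBraid (k + 1) :=
  prodFlip (flipH (k + 1)) (l.map (incl k))

lemma splitProd_append_singleton (l : List (PosBraid k)) (a : PosBraid k) :
    splitProd (l ++ [a]) = flipH (k + 1) (splitProd l) * incl k a := by
  rw [splitProd, List.map_append, List.map_singleton, prodFlip_append_singleton]
  rfl

lemma splitProd_nil : splitProd ([] : List (PosBraid k)) = 1 := rfl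

lemma splitProd_singleton (a : PosBraid k) : splitProd [a] = incl k a := by
  simp [splitProd, prodFlip]

lemma splitProd_sigma_zero_pair (a : PosBraid (k + 1)) :
    splitProd [sigma 0, a] = sigma (Fin.last (k + 1)) * incl (k + 1) a := by
  simp [splitProd, prodFlip, incl_sigma, flipH_sigma]

lemma isSplit_nil : IsSplit (1 : PosBraid (k + 1)) [] :=
  ⟨rfl, by simp, by simp⟩

lemma isSplit_singleton {a : PosBraid k} (ha : a ≠ 1) : IsSplit (incl k a) [a] :=
  ⟨(splitProd_singleton a).symm, by simpa, fun j hj1 hj2 => by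
    rw [List.length_singleton] at hj2; omega⟩

lemma exists_isSplit_incl (a : PosBraid k) : ∃ l, IsSplit (incl k a) l ∧ l.length < 2 := by
  by_cases ha : a = 1
  · exact ⟨[], ha ▸ (map_one (incl k)).symm ▸ isSplit_nil, by simp⟩
  · exact ⟨[a], isSplit_singleton ha, by simp⟩

lemma isSplit_sigma_last_mul (a : PosBraid (k + 1)) :
    IsSplit (sigma (Fin.last (k + 1)) * incl (k + 1) a) [sigma 0, a] := by
  refine ⟨(splitProd_sigma_zero_pair a).symm, by simpa using sigma_ne_one _, ?_⟩
  intro j hj1 hj2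
  obtain rfl : j = 1 := by simp only [List.length_cons, List.length_nil] at hj2; omega
  have : splitProd [(sigma 0 : PosBraid (k + 1))] = sigma 0 := splitProd_singleton _
  exact ⟨⟨1, (one_mul _).trans this.symm⟩,
    fun i ⟨z, hz⟩ => eq_of_mul_sigma_eq_sigma (hz.symm.trans this)⟩

namespace IsSplit

variable {x : PosBraid (k + 1)} {l : List (PosBraid k)} {a : PosBraid k}

lemma eq_splitProd (h : IsSplit x l) : x = splitProd l := h.1

lemma init (h : IsSplit x (l ++ [a])) : IsSplit (splitProd l) l := by
  refine ⟨rfl, fun hl => h.2.1 ?_, fun j hj1 hj2 => ?_⟩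
  · cases l with
    | nil => simp at hl
    | cons b l => simpa using hl
  · have := h.2.2 j hj1 (by rw [List.length_append]; omega)
    rwa [List.take_append_of_le_length hj2.le] at this

lemma exists_eq_mul_sigma_zero (h : IsSplit x (l ++ [a])) (hl : l ≠ []) :
    ∃ z, splitProd l = z * sigma 0 := by
  have := (h.2.2 l.length (List.length_pos_iff.mpr hl) (by simp)).1
  rwa [List.take_left] at this

end IsSplit

lemma eq_of_isSplit_sigma_zero {l : List (PosBraid (k + 1))}
    (h : IsSplit (sigma 0 : PosBraid (k + 2)) l) : l = [sigma 0] := by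
  have hx := IsSplit.eq_splitProd h
  rcases List.eq_nil_or_concat' l with rfl | ⟨l, a, rfl⟩
  · exact absurd hx (sigma_ne_one 0)
  rw [splitProd_append_singleton] at hx
  rcases eq_or_ne l [] with rfl | hl
  · have ha : a = sigma 0 :=
      eq_sigma_zero_of_incl_eq_sigma_zero (by simpa [splitProd_nil] using hx.symm)
    rw [ha]
    rfl
  · obtain ⟨z, hz⟩ := IsSplit.exists_eq_mul_sigma_zero h hl
    rw [hz] at hx
    exact absurd hx.symm (flipH_mul_sigma_zero_mul_incl_ne_sigma_zero z a)

lemma eq_of_isSplit_deltaFull {l : List (PosBraid (k + 1))} (h : IsSplit (deltaFull (k + 2)) l) :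
    l = [sigma 0, deltaFull (k + 1)] := by
  have hx := IsSplit.eq_splitProd h
  rcases List.eq_nil_or_concat' l with rfl | ⟨l, a, rfl⟩
  · exact (incl_ne_deltaFull (1 : PosBraid (k + 1)) ((map_one _).trans hx.symm)).elim
  rw [splitProd_append_singleton] at hx
  rcases eq_or_ne l [] with rfl | hl
  · exact absurd (by simpa [splitProd_nil] using hx.symm) (incl_ne_deltaFull a)
  · obtain ⟨z, hz⟩ := IsSplit.exists_eq_mul_sigma_zero h hl
    rw [hz] at hx
    obtain ⟨rfl, rfl⟩ := eq_of_flipH_mul_sigma_zero_mul_incl_eq_deltaFull hx.symm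
    rw [one_mul] at hz
    have hinit : IsSplit (sigma 0 : PosBraid (k + 2)) l := hz ▸ IsSplit.init h
    rw [eq_of_isSplit_sigma_zero hinit]
    rfl

end Splitting

section Order

lemma eq_one_of_ordP_sigma_zero : ∀ {k : ℕ} {x : PosBraid (k + 1)},
    ordP (k + 1) x (sigma 0) → x = 1
  | 0, _, ⟨p, q, hx, hq, hpq⟩ => by
    obtain rfl : q = 1 := eq_one_of_sigma_pow_eq_sigma hq.symm
    obtain rfl : p = 0 := by omega
    exact hx
  | k + 1, x, ⟨lx, ly, hx, hσ, hlt⟩ => by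
    obtain rfl := eq_of_isSplit_sigma_zero hσ
    rcases hlt with hlen | ⟨hlen, hlex⟩
    · obtain rfl : lx = [] := List.length_eq_zero_iff.mp (by simpa using hlen)
      exact IsSplit.eq_splitProd hx
    · obtain ⟨a, rfl⟩ := List.length_eq_one_iff.mp (by simpa using hlen)
      cases hlex with
      | rel ha => exact absurd (by simp [eq_one_of_ordP_sigma_zero ha]) hx.2.1
      | cons hnil => cases hnil

lemma ordP_one_deltaFull_iff (x : PosBraid 1) : ordP 1 x (deltaFull 1) ↔ x = 1 := by
  have hδ : deltaFull 1 = sigma 0 := by rw [deltaFull_eq_ofWord]; rfl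
  rw [hδ]
  refine ⟨eq_one_of_ordP_sigma_zero, ?_⟩
  rintro rfl
  exact ⟨0, 1, (pow_zero _).symm, (pow_one _).symm, one_pos⟩

theorem ordP_deltaFull_succ_iff {k : ℕ} (x : PosBraid (k + 2)) :
    ordP (k + 2) x (deltaFull (k + 2)) ↔
      (∃ a, x = incl (k + 1) a) ∨
        ∃ a, ordP (k + 1) a (deltaFull (k + 1)) ∧
          x = sigma (Fin.last (k + 1)) * incl (k + 1) a := by
  have hδ : IsSplit (deltaFull (k + 2)) [sigma 0, deltaFull (k + 1)] :=
    deltaFull_succ (k + 1) ▸ isSplit_sigma_last_mul (deltaFull (k + 1))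
  constructor
  · rintro ⟨lx, ly, hx, hy, hlt⟩
    obtain rfl := eq_of_isSplit_deltaFull hy
    rcases hlt with hlen | ⟨hlen, hlex⟩
    · left
      rcases lx with _ | ⟨a, _ | ⟨b, lx⟩⟩
      · exact ⟨1, (IsSplit.eq_splitProd hx).trans (map_one _).symm⟩
      · exact ⟨a, (IsSplit.eq_splitProd hx).trans (splitProd_singleton a)⟩
      · simp at hlen
    · right
      obtain ⟨a₂, a₁, rfl⟩ := List.length_eq_two.mp hlen
      cases hlex with
      | rel h₂ => exact absurd (by simp [eq_one_of_ordP_sigma_zero h₂]) hx.2.1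
      | cons h =>
        cases h with
        | rel h₁ => exact ⟨a₁, h₁, (IsSplit.eq_splitProd hx).trans (splitProd_sigma_zero_pair a₁)⟩
        | cons hnil => cases hnil
  · rintro (⟨a, rfl⟩ | ⟨a, ha, rfl⟩)
    · obtain ⟨l, hl, hlen⟩ := exists_isSplit_incl a
      exact ⟨l, _, hl, hδ, Or.inl (by simpa using hlen)⟩
    · exact ⟨_, _, isSplit_sigma_last_mul a, hδ, Or.inr ⟨rfl, .cons (.rel ha)⟩⟩

end Order

section DescForm

variable {N : ℕ}

/-- `σ_N σ_{N-1} ⋯ σ_m` in `B_{N+1}⁺` (recall that `sigmaP N j` is `σ_{j+1}`). -/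
def descProd (N m : ℕ) : PosBraid N :=
  (((List.range' (m - 1) (N + 1 - m)).reverse).map (sigmaP N)).prod

/-- `B_{m-1}⁺`, generated by `σ_1, …, σ_{m-2}`, inside `B_{N+1}⁺`. -/
def lowerSubmonoid (N m : ℕ) : Submonoid (PosBraid N) :=
  Submonoid.closure {z | ∃ i : Fin N, (i : ℕ) + 3 ≤ m ∧ z = sigma i}

def DescForm (N : ℕ) (x : PosBraid N) : Prop :=
  ∃ m : ℕ, 2 ≤ m ∧ m ≤ N + 1 ∧ ∃ y ∈ lowerSubmonoid N m, x = descProd N m * y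

lemma incl_sigmaP {j : ℕ} (hj : j < N) : incl N (sigmaP N j) = sigmaP (N + 1) j := by
  rw [sigmaP, sigmaP, dif_pos hj, dif_pos (hj.trans N.lt_succ_self), incl_sigma]
  rfl

lemma descProd_self (N : ℕ) : descProd N (N + 1) = 1 := by
  simp [descProd]

lemma descProd_succ {m : ℕ} (hm2 : 2 ≤ m) (hm : m ≤ N + 1) :
    descProd (N + 1) m = sigma (Fin.last N) * incl N (descProd N m) := by
  have hrange : List.range' (m - 1) (N + 1 + 1 - m) = List.range' (m - 1) (N + 1 - m) ++ [N] := by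
    rw [show N + 1 + 1 - m = N + 1 - m + 1 by omega, List.range'_concat]
    congr 2
    omega
  rw [descProd, descProd, hrange, List.reverse_append, List.map_append, List.prod_append,
    map_list_prod, List.map_map]
  congr 1
  · simp [sigmaP, Fin.last]
  · refine congrArg List.prod (List.map_congr_left fun j hj => (incl_sigmaP ?_).symm)
    rw [List.mem_reverse, List.mem_range'_1] at hj
    omega

lemma lowerSubmonoid_succ {m : ℕ} (hm : m ≤ N + 2) :
    lowerSubmonoid (N + 1) m = (lowerSubmonoid N m).map (incl N) := by
  rw [lowerSubmonoid, lowerSubmonoid, MonoidHom.map_mclosure]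
  congr 1
  ext z
  constructor
  · rintro ⟨i, hi, rfl⟩
    exact ⟨sigma ⟨i, by omega⟩, ⟨⟨i, by omega⟩, hi, rfl⟩, rfl⟩
  · rintro ⟨_, ⟨i, hi, rfl⟩, rfl⟩
    exact ⟨i.castSucc, hi, rfl⟩

lemma lowerSubmonoid_top (N : ℕ) : lowerSubmonoid N (N + 2) = ⊤ :=
  top_unique (closure_range_sigma.symm.le.trans
    (Submonoid.closure_mono fun _ ⟨i, hi⟩ => ⟨i, by omega, hi.symm⟩))

lemma descForm_one_iff (x : PosBraid 1) : DescForm 1 x ↔ x = 1 := by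
  refine ⟨?_, fun hx => ⟨2, le_rfl, le_rfl, 1, one_mem _, by rw [hx, mul_one]; rfl⟩⟩
  rintro ⟨m, hm2, hm1, y, hy, rfl⟩
  obtain rfl : m = 2 := by omega
  have hempty : {z : PosBraid 1 | ∃ i : Fin 1, (i : ℕ) + 3 ≤ 2 ∧ z = sigma i} = ∅ :=
    Set.eq_empty_of_forall_notMem fun _ ⟨_, hi, _⟩ => by omega
  rw [lowerSubmonoid, hempty, Submonoid.closure_empty, Submonoid.mem_bot] at hy
  rw [hy, mul_one]
  rfl

theorem descForm_succ_iff (x : PosBraid (N + 1)) :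
    DescForm (N + 1) x ↔
      (∃ a, x = incl N a) ∨ ∃ a, DescForm N a ∧ x = sigma (Fin.last N) * incl N a := by
  constructor
  · rintro ⟨m, hm2, hmN, y, hy, rfl⟩
    rcases hmN.eq_or_lt with rfl | hmN
    · rw [lowerSubmonoid_succ le_rfl] at hy
      obtain ⟨a, -, rfl⟩ := hy
      exact Or.inl ⟨a, by rw [descProd_self, one_mul]⟩
    · rw [lowerSubmonoid_succ (by omega)] at hy
      obtain ⟨y, hy, rfl⟩ := hy
      refine Or.inr ⟨descProd N m * y, ⟨m, hm2, by omega, y, hy, rfl⟩, ?_⟩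
      rw [descProd_succ hm2 (by omega), map_mul, mul_assoc]
  · rintro (⟨a, rfl⟩ | ⟨_, ⟨m, hm2, hmN, y, hy, rfl⟩, rfl⟩)
    · refine ⟨N + 2, by omega, le_rfl, incl N a, ?_, by rw [descProd_self, one_mul]⟩
      rw [lowerSubmonoid_succ le_rfl, lowerSubmonoid_top]
      exact ⟨a, Submonoid.mem_top a, rfl⟩
    · refine ⟨m, hm2, by omega, incl N y, ?_, ?_⟩
      · rw [lowerSubmonoid_succ (by omega)]
        exact ⟨y, hy, rfl⟩
      · rw [descProd_succ hm2 hmN, map_mul, mul_assoc]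

end DescForm

end PosBraid

/-- in `B_n⁺` (`n = k+2 ≥ 2`), a positive braid `x` satisfies
`x <⁺ δ_n` (where `δ_n = σ_{n-1} ⋯ σ_1`) if and only if `x = σ_{n-1} σ_{n-2} ⋯ σ_m · y`
for some `m` with `2 ≤ m ≤ n` and some `y ∈ B_{m-1}⁺`. -/
theorem lt_delta_iff (k : ℕ) (x : PosBraid (k + 1)) :
    ordP (k + 1) x (deltaFull (k + 1)) ↔
      ∃ m : ℕ, 2 ≤ m ∧ m ≤ k + 2 ∧
        ∃ y ∈ Submonoid.closure {z : PosBraid (k + 1) |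
            ∃ i : Fin (k + 1), (i : ℕ) + 3 ≤ m ∧ z = sigma i},
          x = (((List.range' (m - 1) (k + 2 - m)).reverse).map (sigmaP (k + 1))).prod * y := by
  change ordP (k + 1) x (deltaFull (k + 1)) ↔ PosBraid.DescForm (k + 1) x
  induction k with
  | zero => rw [PosBraid.ordP_one_deltaFull_iff, PosBraid.descForm_one_iff]
  | succ k ih =>
    rw [PosBraid.ordP_deltaFull_succ_iff, PosBraid.descForm_succ_iff]
    simp only [ih]
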